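/- Let u rationalise the dataset {(p_i, q_i)} and let e(p, u(q_v)) = inf{ p · q : u(q) ≥ u(q_v) } be the expenditure function at base utility u(q_v). Define M⁻(p, v) = inf{ p · q : p_i · q ≥ p_i · q_i for all i ∈ VRW(v) } where VRW(v) = { i : there is an RP-walk from v to i }, and M⁺(p, v) = min{ p · q_i : i ∈ VRP(v) } where VRP(v) = { i : there is an RP-walk from i to v }. Then M⁻(p, v) ≤ e(p, u(q_v)) ≤ M⁺(p, v). -/

import Mathlib

/-!
Utility can only decrease along an RP-walk, since each step `i → j` says that `q j` was
affordable when `q i` was chosen. Hence every `q i` with `i ∈ VRP(v)` is at least as good as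
`q v`, which bounds `e` from above. Conversely, by local non-satiation a bundle at least as good
as `q i` cannot cost less than `q i` at prices `p i`; applied to every `i ∈ VRW(v)`, whose
bundles are no better than `q v`, this shows that the constraint set of `M⁻` contains that of `e`.
-/

/-- Inner product of a price and a quantity vector. -/
def dotp {K : ℕ} (x y : Fin K → ℝ) : ℝ := ∑ k, x k * y k

/-- One directed edge of the Laspeyres-weighted graph has weight ≤ 1. -/
def RPstep {N K : ℕ} (p q : Fin N → Fin K → ℝ) (i j : Fin N) : Prop :=
  dotp (p i) (q j) ≤ dotp (p i) (q i)

/-- `i R j`: existence of an RP-walk (all edge weights ≤ 1) from `i` to `j`. -/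
def RPrel {N K : ℕ} (p q : Fin N → Fin K → ℝ) : Fin N → Fin N → Prop :=
  Relation.ReflTransGen (RPstep p q)

/-- `VRW(v)`: countries reachable from `v` by an RP-walk (revealed worse set). -/
def VRW {N K : ℕ} (p q : Fin N → Fin K → ℝ) (v : Fin N) : Set (Fin N) :=
  {i | RPrel p q v i}

/-- `VRP(v)`: countries from which there is an RP-walk to `v` (revealed preferred set). -/
def VRP {N K : ℕ} (p q : Fin N → Fin K → ℝ) (v : Fin N) : Set (Fin N) :=
  {i | RPrel p q i v}

/-- Lower bound `M⁻(pr, v)` on the expenditure function: infimum of `pr · x` over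
nonnegative bundles `x` with `p_i · x ≥ p_i · q_i` for all `i ∈ VRW(v)`. -/
noncomputable def Mminus {N K : ℕ} (p q : Fin N → Fin K → ℝ)
    (pr : Fin K → ℝ) (v : Fin N) : ℝ :=
  sInf {r | ∃ x : Fin K → ℝ, (∀ k, 0 ≤ x k) ∧
    (∀ i ∈ VRW p q v, dotp (p i) (q i) ≤ dotp (p i) x) ∧ r = dotp pr x}

/-- Upper bound `M⁺(pr, v)` on the expenditure function: minimum of `pr · q_i` over
`i ∈ VRP(v)`. -/
noncomputable def Mplus {N K : ℕ} (p q : Fin N → Fin K → ℝ)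
    (pr : Fin K → ℝ) (v : Fin N) : ℝ :=
  sInf {r | ∃ i ∈ VRP p q v, r = dotp pr (q i)}

/-- Expenditure function `e(pr, u(x₀)) = inf { pr · x : u(x) ≥ u(x₀), x ≥ 0 }`. -/
noncomputable def expend {K : ℕ} (u : (Fin K → ℝ) → ℝ)
    (pr : Fin K → ℝ) (x₀ : Fin K → ℝ) : ℝ :=
  sInf {r | ∃ x : Fin K → ℝ, (∀ k, 0 ≤ x k) ∧ u x₀ ≤ u x ∧ r = dotp pr x}

lemma dotp_nonneg {K : ℕ} {a x : Fin K → ℝ} (ha : ∀ k, 0 ≤ a k) (hx : ∀ k, 0 ≤ x k) :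
    0 ≤ dotp a x :=
  Finset.sum_nonneg fun k _ => mul_nonneg (ha k) (hx k)

lemma continuous_dotp {K : ℕ} (a : Fin K → ℝ) : Continuous (dotp a) :=
  continuous_finsetSum _ fun k _ => continuous_const.mul (continuous_apply k)

lemma bddBelow_dotp_setOf_nonneg {K : ℕ} {a : Fin K → ℝ} (ha : ∀ k, 0 ≤ a k)
    (P : (Fin K → ℝ) → Prop) :
    BddBelow {r | ∃ x : Fin K → ℝ, (∀ k, 0 ≤ x k) ∧ P x ∧ r = dotp a x} := by
  refine ⟨0, ?_⟩
  rintro r ⟨x, hx, -, rfl⟩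
  exact dotp_nonneg ha hx

lemma utility_le_of_RPrel {N K : ℕ} {p q : Fin N → Fin K → ℝ} {u : (Fin K → ℝ) → ℝ}
    (hq : ∀ i k, 0 ≤ q i k)
    (hrat : ∀ i, ∀ x : Fin K → ℝ, (∀ k, 0 ≤ x k) →
      dotp (p i) x ≤ dotp (p i) (q i) → u x ≤ u (q i))
    {a b : Fin N} (h : RPrel p q a b) : u (q b) ≤ u (q a) := by
  induction h with
  | refl => exact le_rfl
  | tail _ hstep ih => exact (hrat _ _ (hq _) hstep).trans ih

lemma dotp_le_of_utility_le {K : ℕ} {u : (Fin K → ℝ) → ℝ}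
    (hlns : ∀ x : Fin K → ℝ, (∀ k, 0 ≤ x k) → ∀ ε > (0 : ℝ),
      ∃ y : Fin K → ℝ, (∀ k, 0 ≤ y k) ∧ dist y x < ε ∧ u x < u y)
    {a b : Fin K → ℝ} (hrat : ∀ x : Fin K → ℝ, (∀ k, 0 ≤ x k) → dotp a x ≤ dotp a b → u x ≤ u b)
    {x : Fin K → ℝ} (hx : ∀ k, 0 ≤ x k) (hux : u b ≤ u x) : dotp a b ≤ dotp a x := by
  by_contra! hcheap
  have hopen : IsOpen {y | dotp a y < dotp a b} := isOpen_lt (continuous_dotp a) continuous_const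
  obtain ⟨ε, hε, hball⟩ := Metric.isOpen_iff.mp hopen x hcheap
  obtain ⟨y, hy, hyx, huy⟩ := hlns x hx ε hε
  have hyb : u y ≤ u b := hrat y hy (hball (Metric.mem_ball.mpr hyx)).le
  exact (huy.trans_le hyb).not_ge hux

theorem stmt_4_general {N K : ℕ} (p q : Fin N → Fin K → ℝ)
    (hq : ∀ i k, 0 ≤ q i k)
    (u : (Fin K → ℝ) → ℝ)
    (hlns : ∀ x : Fin K → ℝ, (∀ k, 0 ≤ x k) → ∀ ε > (0 : ℝ),
      ∃ y : Fin K → ℝ, (∀ k, 0 ≤ y k) ∧ dist y x < ε ∧ u x < u y)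
    (hrat : ∀ i, ∀ x : Fin K → ℝ, (∀ k, 0 ≤ x k) →
      dotp (p i) x ≤ dotp (p i) (q i) → u x ≤ u (q i))
    (pr : Fin K → ℝ) (hpr : ∀ k, 0 < pr k) (v : Fin N) :
    Mminus p q pr v ≤ expend u pr (q v) ∧ expend u pr (q v) ≤ Mplus p q pr v := by
  have hpr₀ : ∀ k, 0 ≤ pr k := fun k => (hpr k).le
  constructor
  · refine csInf_le_csInf (bddBelow_dotp_setOf_nonneg hpr₀ _) ⟨_, q v, hq v, le_rfl, rfl⟩ ?_
    rintro r ⟨x, hx, hux, rfl⟩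
    refine ⟨x, hx, fun i hi => ?_, rfl⟩
    exact dotp_le_of_utility_le hlns (hrat i) hx ((utility_le_of_RPrel hq hrat hi).trans hux)
  · refine le_csInf ⟨_, v, .refl, rfl⟩ ?_
    rintro r ⟨i, hi, rfl⟩
    exact csInf_le (bddBelow_dotp_setOf_nonneg hpr₀ _)
      ⟨q i, hq i, utility_le_of_RPrel hq hrat hi, rfl⟩

/-- Varian's expenditure bounds: if `u` is a locally non-satiated,
continuous, concave and strictly monotone utility rationalising the dataset, then
`M⁻(p, v) ≤ e(p, u(q_v)) ≤ M⁺(p, v)`. -/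
theorem stmt_4 {N K : ℕ} (p q : Fin N → Fin K → ℝ)
    (hp : ∀ i k, 0 < p i k) (hq : ∀ i k, 0 ≤ q i k)
    (hm : ∀ i, 0 < dotp (p i) (q i))
    (u : (Fin K → ℝ) → ℝ)
    (hcont : Continuous u)
    (hconc : ConcaveOn ℝ {x : Fin K → ℝ | ∀ k, 0 ≤ x k} u)
    (hmono : ∀ x y : Fin K → ℝ, (∀ k, x k ≤ y k) → x ≠ y → u x < u y)
    (hlns : ∀ x : Fin K → ℝ, (∀ k, 0 ≤ x k) → ∀ ε > (0 : ℝ),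
      ∃ y : Fin K → ℝ, (∀ k, 0 ≤ y k) ∧ dist y x < ε ∧ u x < u y)
    (hrat : ∀ i, ∀ x : Fin K → ℝ, (∀ k, 0 ≤ x k) →
      dotp (p i) x ≤ dotp (p i) (q i) → u x ≤ u (q i))
    (pr : Fin K → ℝ) (hpr : ∀ k, 0 < pr k) (v : Fin N) :
    Mminus p q pr v ≤ expend u pr (q v) ∧ expend u pr (q v) ≤ Mplus p q pr v :=
  stmt_4_general p q hq u hlns hrat pr hpr v
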